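/- arXiv:1308.6829 — 7 statements merged into one kernel-verified Lean document; each statement's English description precedes it below -/
import Mathlib

section
/- In ℝ², consider the five closed convex cones: C₁ spanned by (1,0) and (0,−1); C₂ spanned by (0,1) and (1,0); C₃ spanned by (−1,0) and (0,1); C₄ spanned by (−1,−1) and (−1,0); and C₅ spanned by (0,−1) and (−1,−1) (each cone being the set of nonnegative real combinations of its two spanning vectors). Then the union C₁ ∪ C₂ ∪ C₃ ∪ C₄ ∪ C₅ equals all of ℝ², and the interiors of these five cones are pairwise disjoint. -/
/-- The closed convex cone in `ℝ²` spanned by two vectors. -/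
def spanCone (v w : ℝ × ℝ) : Set (ℝ × ℝ) :=
  {x | ∃ a b : ℝ, 0 ≤ a ∧ 0 ≤ b ∧ x = a • v + b • w}

/-- The five dual cones of the Argyres-Douglas (Kronecker `Q_1`) theory. -/
def adCones : Fin 5 → Set (ℝ × ℝ) :=
  ![spanCone (1, 0) (0, -1),
    spanCone (0, 1) (1, 0),
    spanCone (-1, 0) (0, 1),
    spanCone (-1, -1) (-1, 0),
    spanCone (0, -1) (-1, -1)]

lemma mem_spanCone_iff {v w x : ℝ × ℝ} :
    x ∈ spanCone v w ↔ ∃ a b : ℝ, 0 ≤ a ∧ 0 ≤ b ∧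
      x.1 = a * v.1 + b * w.1 ∧ x.2 = a * v.2 + b * w.2 := by
  constructor
  · rintro ⟨a, b, ha, hb, rfl⟩
    exact ⟨a, b, ha, hb, rfl, rfl⟩
  · rintro ⟨a, b, ha, hb, h1, h2⟩
    exact ⟨a, b, ha, hb, by ext <;> simpa⟩

/-- Separation lemma: if a continuous linear functional is nonnegative on `C` and
nonpositive on `D`, and takes a negative value somewhere, then the interiors of `C` and
`D` are disjoint. -/
lemma sep_disjoint (f : (ℝ × ℝ) →L[ℝ] ℝ) (v : ℝ × ℝ) (hv : f v < 0)
    (C D : Set (ℝ × ℝ)) (hC : ∀ x ∈ C, 0 ≤ f x) (hD : ∀ x ∈ D, f x ≤ 0) :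
    Disjoint (interior C) (interior D) := by
  rw [Set.disjoint_left]
  intro x hxC hxD
  obtain ⟨ε1, hε1, hball1⟩ := Metric.isOpen_iff.1 isOpen_interior x hxC
  obtain ⟨ε2, hε2, hball2⟩ := Metric.isOpen_iff.1 isOpen_interior x hxD
  have hvne : v ≠ 0 := by rintro rfl; simp at hv
  set δ : ℝ := min ε1 ε2 / (2 * (‖v‖ + 1)) with hδdef
  have hnorm : (0:ℝ) < ‖v‖ + 1 := by positivity
  have hδ : 0 < δ := by
    apply div_pos (lt_min hε1 hε2)
    positivity
  have hd : ‖δ • v‖ < min ε1 ε2 := by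
    rw [norm_smul, Real.norm_eq_abs, abs_of_pos hδ, hδdef]
    rw [div_mul_eq_mul_div, div_lt_iff₀ (by positivity)]
    nlinarith [lt_min hε1 hε2, norm_nonneg v]
  have h1 : x + δ • v ∈ C := by
    apply interior_subset
    apply hball1
    simp only [Metric.mem_ball, dist_eq_norm]
    calc ‖x + δ • v - x‖ = ‖δ • v‖ := by ring_nf
      _ < ε1 := lt_of_lt_of_le hd (min_le_left _ _)
  have h2 : x - δ • v ∈ D := by
    apply interior_subset
    apply hball2
    simp only [Metric.mem_ball, dist_eq_norm]
    calc ‖x - δ • v - x‖ = ‖δ • v‖ := by rw [norm_sub_rev]; ring_nf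
      _ < ε2 := lt_of_lt_of_le hd (min_le_right _ _)
  have hC' := hC _ h1
  have hD' := hD _ h2
  simp only [map_add, map_sub, map_smul, smul_eq_mul] at hC' hD'
  nlinarith

/-- The first-coordinate functional. -/
noncomputable def ffst : (ℝ × ℝ) →L[ℝ] ℝ := ContinuousLinearMap.fst ℝ ℝ ℝ

/-- The second-coordinate functional. -/
noncomputable def fsnd : (ℝ × ℝ) →L[ℝ] ℝ := ContinuousLinearMap.snd ℝ ℝ ℝ

/-- The functional `y - x`. -/
noncomputable def fdiff : (ℝ × ℝ) →L[ℝ] ℝ :=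
  ContinuousLinearMap.snd ℝ ℝ ℝ - ContinuousLinearMap.fst ℝ ℝ ℝ

/-- The five Argyres-Douglas dual cones cover all of `ℝ²`, and their interiors are
pairwise disjoint. -/
theorem adCones_cover_and_disjoint :
    (⋃ i, adCones i) = Set.univ ∧
    Pairwise (fun i j : Fin 5 => Disjoint (interior (adCones i)) (interior (adCones j))) := by
  -- Bounds on the cones
  have h0 : ∀ x ∈ adCones 0, 0 ≤ x.1 ∧ x.2 ≤ 0 := by
    intro x hx
    simp only [adCones, Matrix.cons_val_zero] at hx
    obtain ⟨a, b, ha, hb, h1, h2⟩ := mem_spanCone_iff.1 hx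
    simp only at h1 h2
    constructor <;> nlinarith
  have h1 : ∀ x ∈ adCones 1, 0 ≤ x.1 ∧ 0 ≤ x.2 := by
    intro x hx
    simp only [adCones, Matrix.cons_val_one, Matrix.head_cons] at hx
    obtain ⟨a, b, ha, hb, h1, h2⟩ := mem_spanCone_iff.1 hx
    simp only at h1 h2
    constructor <;> nlinarith
  have h2 : ∀ x ∈ adCones 2, x.1 ≤ 0 ∧ 0 ≤ x.2 := by
    intro x hx
    have : adCones 2 = spanCone (-1, 0) (0, 1) := rfl
    rw [this] at hx
    obtain ⟨a, b, ha, hb, h1, h2⟩ := mem_spanCone_iff.1 hx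
    simp only at h1 h2
    constructor <;> nlinarith
  have h3 : ∀ x ∈ adCones 3, x.1 ≤ 0 ∧ x.2 ≤ 0 ∧ x.1 ≤ x.2 := by
    intro x hx
    have : adCones 3 = spanCone (-1, -1) (-1, 0) := rfl
    rw [this] at hx
    obtain ⟨a, b, ha, hb, h1, h2⟩ := mem_spanCone_iff.1 hx
    simp only at h1 h2
    refine ⟨by nlinarith, by nlinarith, by nlinarith⟩
  have h4 : ∀ x ∈ adCones 4, x.1 ≤ 0 ∧ x.2 ≤ 0 ∧ x.2 ≤ x.1 := by
    intro x hx
    have : adCones 4 = spanCone (0, -1) (-1, -1) := rfl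
    rw [this] at hx
    obtain ⟨a, b, ha, hb, h1, h2⟩ := mem_spanCone_iff.1 hx
    simp only at h1 h2
    refine ⟨by nlinarith, by nlinarith, by nlinarith⟩
  have hfst_neg : ffst (-1, 0) < 0 := by norm_num [ffst]
  have hsnd_neg : fsnd (0, -1) < 0 := by norm_num [fsnd]
  have hdiff_neg : fdiff (1, 0) < 0 := by norm_num [fdiff]
  constructor
  · -- Covering
    rw [Set.eq_univ_iff_forall]
    intro p
    rcases le_total 0 p.1 with hx | hx
    · rcases le_total 0 p.2 with hy | hy
      · -- first quadrant: cone 1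
        refine Set.mem_iUnion.2 ⟨1, ?_⟩
        show p ∈ spanCone (0, 1) (1, 0)
        exact mem_spanCone_iff.2 ⟨p.2, p.1, hy, hx, by norm_num, by norm_num⟩
      · -- fourth quadrant: cone 0
        refine Set.mem_iUnion.2 ⟨0, ?_⟩
        show p ∈ spanCone (1, 0) (0, -1)
        exact mem_spanCone_iff.2 ⟨p.1, -p.2, hx, by linarith, by norm_num, by norm_num⟩
    · rcases le_total 0 p.2 with hy | hy
      · -- second quadrant: cone 2
        refine Set.mem_iUnion.2 ⟨2, ?_⟩
        show p ∈ spanCone (-1, 0) (0, 1)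
        exact mem_spanCone_iff.2 ⟨-p.1, p.2, by linarith, hy, by norm_num, by norm_num⟩
      · rcases le_total p.1 p.2 with hxy | hxy
        · -- cone 3
          refine Set.mem_iUnion.2 ⟨3, ?_⟩
          show p ∈ spanCone (-1, -1) (-1, 0)
          refine mem_spanCone_iff.2 ⟨-p.2, p.2 - p.1, by linarith, by linarith, ?_, ?_⟩ <;>
            simp <;> ring
        · -- cone 4
          refine Set.mem_iUnion.2 ⟨4, ?_⟩
          show p ∈ spanCone (0, -1) (-1, -1)
          refine mem_spanCone_iff.2 ⟨p.1 - p.2, -p.1, by linarith, by linarith, ?_, ?_⟩ <;>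
            simp <;> ring
  · -- Pairwise disjointness of interiors
    have d01 : Disjoint (interior (adCones 0)) (interior (adCones 1)) :=
      (sep_disjoint fsnd (0, -1) hsnd_neg (adCones 1) (adCones 0)
        (fun x hx => by have := (h1 x hx).2; simpa [fsnd])
        (fun x hx => by have := (h0 x hx).2; simpa [fsnd])).symm
    have d02 : Disjoint (interior (adCones 0)) (interior (adCones 2)) :=
      sep_disjoint ffst (-1, 0) hfst_neg _ _
        (fun x hx => by have := (h0 x hx).1; simpa [ffst])
        (fun x hx => by have := (h2 x hx).1; simpa [ffst])
    have d03 : Disjoint (interior (adCones 0)) (interior (adCones 3)) :=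
      sep_disjoint ffst (-1, 0) hfst_neg _ _
        (fun x hx => by have := (h0 x hx).1; simpa [ffst])
        (fun x hx => by have := (h3 x hx).1; simpa [ffst])
    have d04 : Disjoint (interior (adCones 0)) (interior (adCones 4)) :=
      sep_disjoint ffst (-1, 0) hfst_neg _ _
        (fun x hx => by have := (h0 x hx).1; simpa [ffst])
        (fun x hx => by have := (h4 x hx).1; simpa [ffst])
    have d12 : Disjoint (interior (adCones 1)) (interior (adCones 2)) :=
      sep_disjoint ffst (-1, 0) hfst_neg _ _
        (fun x hx => by have := (h1 x hx).1; simpa [ffst])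
        (fun x hx => by have := (h2 x hx).1; simpa [ffst])
    have d13 : Disjoint (interior (adCones 1)) (interior (adCones 3)) :=
      sep_disjoint fsnd (0, -1) hsnd_neg _ _
        (fun x hx => by have := (h1 x hx).2; simpa [fsnd])
        (fun x hx => by have := (h3 x hx).2.1; simpa [fsnd])
    have d14 : Disjoint (interior (adCones 1)) (interior (adCones 4)) :=
      sep_disjoint fsnd (0, -1) hsnd_neg _ _
        (fun x hx => by have := (h1 x hx).2; simpa [fsnd])
        (fun x hx => by have := (h4 x hx).2.1; simpa [fsnd])
    have d23 : Disjoint (interior (adCones 2)) (interior (adCones 3)) :=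
      sep_disjoint fsnd (0, -1) hsnd_neg _ _
        (fun x hx => by have := (h2 x hx).2; simpa [fsnd])
        (fun x hx => by have := (h3 x hx).2.1; simpa [fsnd])
    have d24 : Disjoint (interior (adCones 2)) (interior (adCones 4)) :=
      sep_disjoint fsnd (0, -1) hsnd_neg _ _
        (fun x hx => by have := (h2 x hx).2; simpa [fsnd])
        (fun x hx => by have := (h4 x hx).2.1; simpa [fsnd])
    have d34 : Disjoint (interior (adCones 3)) (interior (adCones 4)) :=
      sep_disjoint fdiff (1, 0) hdiff_neg _ _
        (fun x hx => by have := (h3 x hx).2.2; simp [fdiff]; linarith)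
        (fun x hx => by have := (h4 x hx).2.2; simp [fdiff]; linarith)
    intro i j hij
    fin_cases i <;> fin_cases j
    · exact absurd rfl hij
    · exact d01
    · exact d02
    · exact d03
    · exact d04
    · exact d01.symm
    · exact absurd rfl hij
    · exact d12
    · exact d13
    · exact d14
    · exact d02.symm
    · exact d12.symm
    · exact absurd rfl hij
    · exact d23
    · exact d24
    · exact d03.symm
    · exact d13.symm
    · exact d23.symm
    · exact absurd rfl hij
    · exact d34
    · exact d04.symm
    · exact d14.symm
    · exact d24.symm
    · exact d34.symm
    · exact absurd rfl hij
end

section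
/- In ℝ², define the cones: A spanned by (1,0) and (0,1); for each integer n ≥ 0, B_n spanned by (1−n, −n) and (−n, −1−n); and C_n spanned by (−1−n, −n) and (−n, 1−n) (each cone being the nonnegative real span of its two generators). Then the union A ∪ (∪_{n≥0} B_n) ∪ (∪_{n≥0} C_n) equals ℝ² minus the open ray {(−t, −t) : t > 0}. -/
/-- The dual cones of seeds of the Kronecker quiver `Q_2` (pure `SU(2)` gauge theory)
cover the plane minus the open ray `{(-t,-t) : t > 0}` against which they accumulate. -/
theorem su2_cones_cover :
    spanCone (1, 0) (0, 1) ∪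
      (⋃ n : ℕ, spanCone (1 - (n : ℝ), -(n : ℝ)) (-(n : ℝ), -1 - (n : ℝ))) ∪
      (⋃ n : ℕ, spanCone (-1 - (n : ℝ), -(n : ℝ)) (-(n : ℝ), 1 - (n : ℝ))) =
    {p : ℝ × ℝ | ∃ t : ℝ, 0 < t ∧ p = (-t, -t)}ᶜ := by
  ext ⟨x, y⟩
  simp only [spanCone, Set.mem_union, Set.mem_iUnion, Set.mem_setOf_eq, Set.mem_compl_iff,
    Prod.mk.injEq, Prod.smul_mk, Prod.mk_add_mk, smul_eq_mul, not_exists, not_and]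
  constructor
  · rintro ((⟨a, b, ha, hb, hx, hy⟩ | ⟨n, a, b, ha, hb, hx, hy⟩) | ⟨n, a, b, ha, hb, hx, hy⟩) t ht ⟨hxt, hyt⟩ <;>
      nlinarith [ht, ha, hb]
  · intro h
    rcases lt_trichotomy x y with hxy | hxy | hxy
    · -- x < y : C cones
      have hx0 : x ≤ 0 ∨ 0 ≤ x := le_or_gt x 0 |>.imp id le_of_lt
      rcases le_or_gt 0 x with hx | hx
      · exact Or.inl (Or.inl ⟨x, y, hx, by linarith, by norm_num⟩)
      · set d : ℝ := y - x with hd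
        have hdpos : 0 < d := by simp [hd]; linarith
        set n : ℕ := ⌈-y / d⌉₊ with hn
        have h1 : -y / d ≤ (n : ℝ) := Nat.le_ceil _
        have h2 : (n : ℝ) ≤ -x / d := by
          rcases le_or_gt 0 (-y / d) with hc | hc
          · have := Nat.ceil_lt_add_one hc
            have : (n : ℝ) < -y / d + 1 := this
            have hne : d ≠ 0 := ne_of_gt hdpos
            have : -y / d + 1 = -x / d := by field_simp [hd]; ring
            linarith [Nat.ceil_lt_add_one hc, this]
          · have : n = 0 := Nat.ceil_eq_zero.mpr hc.le
            rw [this]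
            push_cast
            apply div_nonneg <;> linarith
        have ha : 0 ≤ -(x + n * d) := by
          have := (le_div_iff₀ hdpos).mp h2
          linarith
        have hb : 0 ≤ y + n * d := by
          have := (div_le_iff₀ hdpos).mp h1
          linarith
        refine Or.inr ⟨n, -(x + n * d), y + n * d, ha, hb, by rw [hd]; ring, by rw [hd]; ring⟩
    · -- x = y
      rcases le_or_gt 0 x with hx | hx
      · exact Or.inl (Or.inl ⟨x, y, hx, hxy ▸ hx, by norm_num⟩)
      · exact absurd (show y = -(-x) by rw [← hxy]; ring) (h (-x) (by linarith) (by ring))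
    · -- y < x : B cones
      rcases le_or_gt 0 y with hy | hy
      · exact Or.inl (Or.inl ⟨x, y, by linarith, hy, by norm_num⟩)
      · set d : ℝ := x - y with hd
        have hdpos : 0 < d := by simp [hd]; linarith
        set n : ℕ := ⌈-x / d⌉₊ with hn
        have h1 : -x / d ≤ (n : ℝ) := Nat.le_ceil _
        have h2 : (n : ℝ) ≤ -y / d := by
          rcases le_or_gt 0 (-x / d) with hc | hc
          · have hne : d ≠ 0 := ne_of_gt hdpos
            have heq : -x / d + 1 = -y / d := by field_simp [hd]; ring
            linarith [Nat.ceil_lt_add_one hc, heq]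
          · have : n = 0 := Nat.ceil_eq_zero.mpr hc.le
            rw [this]
            push_cast
            apply div_nonneg <;> linarith
        have ha : 0 ≤ x + n * d := by
          have := (div_le_iff₀ hdpos).mp h1
          linarith
        have hb : 0 ≤ -(y + n * d) := by
          have := (le_div_iff₀ hdpos).mp h2
          linarith
        exact Or.inl (Or.inr ⟨n, x + n * d, -(y + n * d), ha, hb, by rw [hd]; ring, by rw [hd]; ring⟩)
end

section
/- For each integer n ≥ 0 define T_n : ℤ² → ℤ² by T_n(e, m) = (e, m) + max(e + n·m, 0)·(2n, −2). For any starting point v₀ = (e, m) ∈ ℤ × 2ℤ, define v_{n+1} = T_n(v_n). Then the sequence (v_n) is eventually constant, and its limit (e∞, m∞) satisfies either m∞ < 0, or m∞ = 0 and e∞ ≤ 0. -/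
private def AA (v : ℕ → ℤ × ℤ) (n : ℕ) : ℤ := (v n).1 + (n : ℤ) * (v n).2

/-- Composing the infinite chain of anti-wall (tropical) transformations
`T_n(e,m) = (e,m) + max(e + n m, 0) • (2n, -2)` of pure `SU(2)` gauge theory, starting
from any charge `(e,m)` with `m` even, is eventually constant, and the limit `(e∞, m∞)`
satisfies `m∞ < 0`, or `m∞ = 0` and `e∞ ≤ 0`. -/
theorem su2_antiwall_chain_converges (e m : ℤ) (hm : Even m)
    (v : ℕ → ℤ × ℤ) (hv0 : v 0 = (e, m))
    (hstep : ∀ n : ℕ, v (n + 1) =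
      ((v n).1 + max ((v n).1 + (n : ℤ) * (v n).2) 0 * (2 * (n : ℤ)),
       (v n).2 - 2 * max ((v n).1 + (n : ℤ) * (v n).2) 0)) :
    ∃ N : ℕ, (∀ n : ℕ, N ≤ n → v n = v N) ∧
      ((v N).2 < 0 ∨ ((v N).2 = 0 ∧ (v N).1 ≤ 0)) := by
  clear hv0 hm
  have hM : ∀ n : ℕ, (v (n+1)).2 = (v n).2 - 2 * max (AA v n) 0 := by
    intro n; rw [hstep n]; rfl
  have hA : ∀ n : ℕ, AA v (n+1) = AA v n + (v n).2 - 2 * max (AA v n) 0 := by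
    intro n
    simp only [AA, hstep n]
    push_cast
    ring
  have hmono : ∀ i j : ℕ, i ≤ j → (v j).2 ≤ (v i).2 := by
    intro i j hij
    induction j, hij using Nat.le_induction with
    | base => exact le_rfl
    | succ n hn ih =>
      have h0 : 0 ≤ max (AA v n) 0 := le_max_right _ _
      have := hM n
      linarith
  have hidle : ∀ n : ℕ, AA v n ≤ 0 → v (n+1) = v n := by
    intro n h
    have hmax : max ((v n).1 + (n : ℤ) * (v n).2) 0 = 0 := max_eq_right h
    rw [hstep n, hmax]
    simp
  have hstab : ∀ N : ℕ, AA v N ≤ 0 → (v N).2 ≤ 0 →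
      ∀ n : ℕ, N ≤ n → v n = v N ∧ AA v n ≤ 0 := by
    intro N hA0 hμ0 n hn
    induction n, hn using Nat.le_induction with
    | base => exact ⟨rfl, hA0⟩
    | succ n hn ih =>
      obtain ⟨hveq, han⟩ := ih
      have h1 : v (n+1) = v n := hidle n han
      refine ⟨h1.trans hveq, ?_⟩
      have h2 := hA n
      have hmax : max (AA v n) 0 = 0 := max_eq_right han
      rw [hmax] at h2
      have hμn : (v n).2 ≤ 0 := by rw [hveq]; exact hμ0
      linarith
  have hneg : ∃ n : ℕ, (v n).2 ≤ 0 := by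
    by_contra hc
    push_neg at hc
    have hgrow : ∀ n : ℕ, ∃ j : ℕ, n ≤ j ∧ 0 < AA v j := by
      intro n
      by_contra hg
      push_neg at hg
      have key : ∀ t : ℕ, AA v n + t ≤ AA v (n + t) := by
        intro t
        induction t with
        | zero => simp
        | succ t ih =>
          have h1 : AA v (n+t) ≤ 0 := hg _ (Nat.le_add_right _ _)
          have h2 := hA (n+t)
          have hmax : max (AA v (n+t)) 0 = 0 := max_eq_right h1
          rw [hmax] at h2
          have h3 : 0 < (v (n+t)).2 := hc _
          have h4 : n + (t+1) = n + t + 1 := rfl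
          rw [h4]
          push_cast
          push_cast at ih
          linarith
      have ht : (1 : ℤ) - AA v n ≤ ((1 - AA v n).toNat : ℤ) := Int.self_le_toNat _
      have h5 := key (1 - AA v n).toNat
      have h4 : AA v (n + (1 - AA v n).toNat) ≤ 0 := hg _ (Nat.le_add_right _ _)
      linarith
    have hdrop : ∀ n : ℕ, ∃ j : ℕ, (v j).2 ≤ (v n).2 - 2 := by
      intro n
      obtain ⟨j, hj, hpos⟩ := hgrow n
      refine ⟨j + 1, ?_⟩
      have h2 := hM j
      have hmax : max (AA v j) 0 = AA v j := max_eq_left hpos.le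
      rw [hmax] at h2
      have hjn : (v j).2 ≤ (v n).2 := hmono n j hj
      linarith
    have hiter : ∀ k : ℕ, ∃ n : ℕ, (v n).2 ≤ (v 0).2 - 2 * k := by
      intro k
      induction k with
      | zero => exact ⟨0, by simp⟩
      | succ k ih =>
        obtain ⟨n, hn⟩ := ih
        obtain ⟨j, hj⟩ := hdrop n
        refine ⟨j, ?_⟩
        push_cast
        push_cast at hn
        linarith
    obtain ⟨n, hn⟩ := hiter ((v 0).2).toNat
    have h0 : 0 < (v 0).2 := hc 0
    have h1 : (((v 0).2).toNat : ℤ) = (v 0).2 := Int.toNat_of_nonneg h0.le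
    have h2 := hc n
    rw [h1] at hn
    linarith
  obtain ⟨n, hn⟩ := hneg
  have hsettle : ∃ N : ℕ, AA v N ≤ 0 ∧ (v N).2 ≤ 0 := by
    by_cases h : AA v n ≤ 0
    · exact ⟨n, h, hn⟩
    · push_neg at h
      have hmax : max (AA v n) 0 = AA v n := max_eq_left h.le
      have h2 := hA n
      have h3 := hM n
      rw [hmax] at h2 h3
      exact ⟨n + 1, by linarith, by linarith⟩
  obtain ⟨N, hAN, hμN⟩ := hsettle
  refine ⟨N, fun n hn' => (hstab N hAN hμN n hn').1, ?_⟩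
  rcases lt_or_eq_of_le hμN with h | h
  · exact Or.inl h
  · right
    refine ⟨h, ?_⟩
    have h2 : AA v N = (v N).1 + (N : ℤ) * (v N).2 := rfl
    rw [h, mul_zero, add_zero] at h2
    linarith
end

section
/- Let y be an invertible variable and let A be the quantum torus over ℤ[y,y⁻¹] with basis X_v for v in the half-integer lattice (½ℤ)², and product X_v * X_w = y^{2(v₁w₂ − v₂w₁)} X_{v+w}. Define F(W₀) = X_{(0,0)}, F(W₁) = X_{(−½,−½)} + X_{(−½,½)} + X_{(½,½)}, and F(W₂) = X_{(−1,−1)} + X_{(0,0)} + X_{(1,1)} + (y⁻¹+y)·X_{(−1,0)} + X_{(−1,1)} + (y⁻¹+y)·X_{(0,1)}. Then F(W₁) * F(W₁) = F(W₀) + F(W₂). -/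
/-- In the quantum torus on the half-integer lattice `(½ℤ)²` with multiplication
`X_v * X_w = y^{2(v₁w₂ - v₂w₁)} X_{v+w}` (formal powers of the invertible variable `y`
encoded by a multiplicative map `Y : ℚ → R`, so that `Y t = "y^t"` and `y = Y 1`),
the Coulomb-branch generating functionals of `SU(2)` Wilson lines
`F(W₀) = X_{(0,0)}`, `F(W₁) = X_{(-½,-½)} + X_{(-½,½)} + X_{(½,½)}`,
`F(W₂) = X_{(-1,-1)} + X_{(0,0)} + X_{(1,1)} + (y⁻¹+y) X_{(-1,0)} + X_{(-1,1)}
+ (y⁻¹+y) X_{(0,1)}` satisfy `F(W₁) * F(W₁) = F(W₀) + F(W₂)`. -/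
theorem su2_wilson_ope {R A : Type*} [CommRing R] [Ring A] [Algebra R A]
    (Y : ℚ → R) (hY0 : Y 0 = 1) (hYadd : ∀ s t : ℚ, Y (s + t) = Y s * Y t)
    (X : ℚ × ℚ → A)
    (hmul : ∀ a b c d : ℤ,
      X ((a : ℚ) / 2, (b : ℚ) / 2) * X ((c : ℚ) / 2, (d : ℚ) / 2) =
        Y (2 * ((a : ℚ) / 2 * ((d : ℚ) / 2) - (b : ℚ) / 2 * ((c : ℚ) / 2))) •
          X ((a : ℚ) / 2 + (c : ℚ) / 2, (b : ℚ) / 2 + (d : ℚ) / 2)) :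
    (X (-1/2, -1/2) + X (-1/2, 1/2) + X (1/2, 1/2)) *
        (X (-1/2, -1/2) + X (-1/2, 1/2) + X (1/2, 1/2)) =
      X (0, 0) +
        (X (-1, -1) + X (0, 0) + X (1, 1) + (Y (-1) + Y 1) • X (-1, 0) + X (-1, 1) +
          (Y (-1) + Y 1) • X (0, 1)) := by
  have key : ∀ a b c d : ℤ, X ((a:ℚ)/2, (b:ℚ)/2) * X ((c:ℚ)/2, (d:ℚ)/2) =
      Y ((a*d - b*c : ℤ)/2 : ℚ) • X (((a+c : ℤ):ℚ)/2, ((b+d : ℤ):ℚ)/2) := by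
    intro a b c d
    rw [hmul a b c d]
    push_cast
    ring_nf
  have e1 := key (-1) (-1) (-1) (-1)
  have e2 := key (-1) (-1) (-1) 1
  have e3 := key (-1) (-1) 1 1
  have e4 := key (-1) 1 (-1) (-1)
  have e5 := key (-1) 1 (-1) 1
  have e6 := key (-1) 1 1 1
  have e7 := key 1 1 (-1) (-1)
  have e8 := key 1 1 (-1) 1
  have e9 := key 1 1 1 1
  norm_num at e1 e2 e3 e4 e5 e6 e7 e8 e9
  simp only [mul_add, add_mul]
  norm_num [e1, e2, e3, e4, e5, e6, e7, e8, e9, hY0, one_smul, add_smul]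
  abel
end

section
/- Let r, s, n be positive integers, and let A₁, A₂ : ℂʳ → ℂˢ, B₁,…,B_n : ℂˢ → ℂ, C₁,…,C_n : ℂ → ℂʳ be linear maps, and λ₁,…,λ_n distinct nonzero complex numbers. Assume: (i) Ker(A₁) ∩ Ker(A₂) = 0; (ii) ∩_{i=1}^{n} Ker(B_i) = 0; (iii) B_i ∘ (A₁ − λ_i A₂) = 0 for all i. Then both A₁ and A₂ are injective. -/
/-- Stability analysis for framed quiver representations of `SU(2)` Wilson lines:
given maps `A₁ A₂ : ℂʳ → ℂˢ`, `Bᵢ : ℂˢ → ℂ`, `Cᵢ : ℂ → ℂʳ` and distinct nonzero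
`λᵢ` satisfying `Ker A₁ ∩ Ker A₂ = 0`, `∩ᵢ Ker Bᵢ = 0`, and `Bᵢ ∘ (A₁ - λᵢ A₂) = 0`,
both `A₁` and `A₂` are injective. -/
theorem framed_su2_A_injective (r s n : ℕ) (hr : 0 < r) (hs : 0 < s) (hn : 0 < n)
    (A₁ A₂ : (Fin r → ℂ) →ₗ[ℂ] (Fin s → ℂ))
    (B : Fin n → ((Fin s → ℂ) →ₗ[ℂ] ℂ))
    (C : Fin n → (ℂ →ₗ[ℂ] (Fin r → ℂ)))
    (lam : Fin n → ℂ)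
    (hdist : ∀ i j : Fin n, i ≠ j → lam i ≠ lam j)
    (hlam : ∀ i : Fin n, lam i ≠ 0)
    (hker : LinearMap.ker A₁ ⊓ LinearMap.ker A₂ = ⊥)
    (hBker : ⨅ i : Fin n, LinearMap.ker (B i) = ⊥)
    (hrel : ∀ i : Fin n, (B i).comp (A₁ - lam i • A₂) = 0) :
    Function.Injective A₁ ∧ Function.Injective A₂ := by
  have hrel' : ∀ i x, B i (A₁ x) - lam i * B i (A₂ x) = 0 := by
    intro i x
    have := congrArg (fun f => f x) (hrel i)
    simpa [LinearMap.comp_apply, sub_eq_zero, mul_comm] using this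
  constructor
  · rw [← LinearMap.ker_eq_bot, eq_bot_iff]
    intro x hx
    have hx1 : A₁ x = 0 := hx
    have h2 : A₂ x = 0 := by
      have : A₂ x ∈ ⨅ i : Fin n, LinearMap.ker (B i) := by
        rw [Submodule.mem_iInf]
        intro i
        have := hrel' i x
        rw [hx1, map_zero, zero_sub, neg_eq_zero] at this
        exact (mul_eq_zero.mp this).resolve_left (hlam i)
      rwa [hBker, Submodule.mem_bot] at this
    have : x ∈ LinearMap.ker A₁ ⊓ LinearMap.ker A₂ := by
      simp [Submodule.mem_inf, LinearMap.mem_ker, hx1, h2]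
    rw [hker] at this
    exact this
  · rw [← LinearMap.ker_eq_bot, eq_bot_iff]
    intro x hx
    have hx2 : A₂ x = 0 := hx
    have h1 : A₁ x = 0 := by
      have : A₁ x ∈ ⨅ i : Fin n, LinearMap.ker (B i) := by
        rw [Submodule.mem_iInf]
        intro i
        have := hrel' i x
        rwa [hx2, map_zero, mul_zero, sub_zero] at this
      rwa [hBker, Submodule.mem_bot] at this
    have : x ∈ LinearMap.ker A₁ ⊓ LinearMap.ker A₂ := by
      simp [Submodule.mem_inf, LinearMap.mem_ker, h1, hx2]
    rw [hker] at this
    exact this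
end

section
/- Let r, s, n be positive integers, A₁, A₂ : ℂʳ → ℂˢ, B₁,…,B_n : ℂˢ → ℂ, C₁,…,C_n : ℂ → ℂʳ linear maps, and λ₁,…,λ_n distinct nonzero complex numbers. Assume: (i) Ker(A₁) ∩ Ker(A₂) = 0; (ii) ∩_{i=1}^{n} Ker(B_i) = 0; (iii) Σ_{i=1}^{n} C_i ∘ B_i = 0; (iv) Σ_{i=1}^{n} λ_i · C_i ∘ B_i = 0; (v) B_i ∘ (A₁ − λ_i A₂) = 0 for all i; (vi) (A₁ − λ_i A₂) ∘ C_i = 0 for all i. Then C_i = 0 for every i. -/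
open Finset in
/-- Proposition "Czero": for framed cocyclic representations of the framed Kronecker
quiver with generic cubic superpotential, the F-term relations
`Σᵢ Cᵢ∘Bᵢ = 0`, `Σᵢ λᵢ Cᵢ∘Bᵢ = 0`, `Bᵢ∘(A₁-λᵢA₂) = 0`, `(A₁-λᵢA₂)∘Cᵢ = 0`
together with the stability conditions `Ker A₁ ∩ Ker A₂ = 0` and `∩ᵢ Ker Bᵢ = 0`
force all maps `Cᵢ` out of the framing node to vanish. -/
theorem framed_su2_C_vanishes (r s n : ℕ) (hr : 0 < r) (hs : 0 < s) (hn : 0 < n)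
    (A₁ A₂ : (Fin r → ℂ) →ₗ[ℂ] (Fin s → ℂ))
    (B : Fin n → ((Fin s → ℂ) →ₗ[ℂ] ℂ))
    (C : Fin n → (ℂ →ₗ[ℂ] (Fin r → ℂ)))
    (lam : Fin n → ℂ)
    (hdist : ∀ i j : Fin n, i ≠ j → lam i ≠ lam j)
    (hlam : ∀ i : Fin n, lam i ≠ 0)
    (hker : LinearMap.ker A₁ ⊓ LinearMap.ker A₂ = ⊥)
    (hBker : ⨅ i : Fin n, LinearMap.ker (B i) = ⊥)
    (hCB : (∑ i : Fin n, (C i).comp (B i)) = 0)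
    (hlamCB : (∑ i : Fin n, lam i • (C i).comp (B i)) = 0)
    (hBA : ∀ i : Fin n, (B i).comp (A₁ - lam i • A₂) = 0)
    (hAC : ∀ i : Fin n, (A₁ - lam i • A₂).comp (C i) = 0) :
    ∀ i : Fin n, C i = 0 := by
  intro i
  set v : Fin r → ℂ := C i 1 with hv
  -- reduce to showing v = 0
  have key : v = 0 → C i = 0 := by
    intro h0
    apply LinearMap.ext_ring
    simpa using h0
  apply key
  -- (vi): A₁ v = lam i • A₂ v
  have hA1v : A₁ v = lam i • A₂ v := by
    have := LinearMap.congr_fun (hAC i) 1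
    simp only [LinearMap.comp_apply, LinearMap.sub_apply, LinearMap.smul_apply,
      LinearMap.zero_apply] at this
    have := sub_eq_zero.mp this
    exact this
  -- for j ≠ i, B j (A₂ v) = 0
  have hBj : ∀ j : Fin n, j ≠ i → B j (A₂ v) = 0 := by
    intro j hji
    have h1 := LinearMap.congr_fun (hBA j) v
    simp only [LinearMap.comp_apply, LinearMap.sub_apply, LinearMap.smul_apply,
      LinearMap.zero_apply, map_sub, map_smul] at h1
    have h1' : B j (A₁ v) = lam j * B j (A₂ v) := by
      have := sub_eq_zero.mp h1
      simpa using this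
    have h2 : B j (A₁ v) = lam i * B j (A₂ v) := by
      rw [hA1v, map_smul]; rfl
    have h3 : (lam j - lam i) * B j (A₂ v) = 0 := by
      rw [sub_mul, ← h1', ← h2, sub_self]
    rcases mul_eq_zero.mp h3 with h | h
    · exact absurd (sub_eq_zero.mp h) (hdist j i hji)
    · exact h
  -- apply hCB at A₂ v
  have hsum := LinearMap.congr_fun hCB (A₂ v)
  simp only [LinearMap.sum_apply, LinearMap.comp_apply, LinearMap.zero_apply] at hsum
  have hterm : ∀ k : Fin n, C k (B k (A₂ v)) = B k (A₂ v) • C k 1 := by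
    intro k
    rw [← map_smul, smul_eq_mul, mul_one]
  simp only [hterm] at hsum
  have hsum' : B i (A₂ v) • v = 0 := by
    rw [← hsum]
    rw [Finset.sum_eq_single i]
    · intro b _ hb
      rw [hBj b hb, zero_smul]
    · intro h; exact absurd (Finset.mem_univ i) h
  rcases smul_eq_zero.mp hsum' with h | h
  · -- B i (A₂ v) = 0, so A₂ v = 0, then A₁ v = 0, then v = 0
    have hA2v : A₂ v = 0 := by
      have : A₂ v ∈ ⨅ j : Fin n, LinearMap.ker (B j) := by
        rw [Submodule.mem_iInf]
        intro j
        rw [LinearMap.mem_ker]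
        by_cases hji : j = i
        · rw [hji]; exact h
        · exact hBj j hji
      rwa [hBker, Submodule.mem_bot] at this
    have hA1v' : A₁ v = 0 := by rw [hA1v, hA2v, smul_zero]
    have : v ∈ LinearMap.ker A₁ ⊓ LinearMap.ker A₂ := ⟨hA1v', hA2v⟩
    rwa [hker, Submodule.mem_bot] at this
  · exact h
end

section
/- Let Γ = ℤ² with the antisymmetric pairing ⟨(a,b),(c,d)⟩ = k·(ad − bc) for a fixed positive integer k, and let γ₁ = (1,0), γ₂ = (0,1). Define the dual cone Č = {γ ∈ Γ : ⟨γ, γ₁⟩ ≥ 0 and ⟨γ, γ₂⟩ ≥ 0}, the left-mutated seed μ_{L1}(γ₁) = −γ₁, μ_{L1}(γ₂) = γ₂ + k·γ₁, and the transported mutated dual cone Č' = {γ + ⟨γ, γ₁⟩·γ₁ : γ ∈ Γ, ⟨γ, μ_{L1}(γ₁)⟩ ≥ 0 and ⟨γ, μ_{L1}(γ₂)⟩ ≥ 0}. Then Č ∩ Č' = {γ_c ∈ Γ : ⟨γ_c, γ₁⟩ = 0 and ⟨γ_c, γ₂⟩ ≥ 0}, a codimension-one face of each cone. -/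
/-- The antisymmetric pairing `⟨(a,b),(c,d)⟩ = k (ad - bc)` on `ℤ²`. -/
def kPairing (k : ℤ) (v w : ℤ × ℤ) : ℤ := k * (v.1 * w.2 - v.2 * w.1)

/-- For the Kronecker quiver `Q_k` with seed `γ₁ = (1,0)`, `γ₂ = (0,1)`, the dual cone
`Č = {γ : ⟨γ,γ₁⟩ ≥ 0, ⟨γ,γ₂⟩ ≥ 0}` and the transported mutated dual cone
`Č' = {γ + ⟨γ,γ₁⟩ γ₁ : ⟨γ, -γ₁⟩ ≥ 0, ⟨γ, γ₂ + k γ₁⟩ ≥ 0}` intersect exactly in the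
codimension-one face `{γ_c : ⟨γ_c,γ₁⟩ = 0, ⟨γ_c,γ₂⟩ ≥ 0}`. -/
theorem mutated_dual_cones_meet_in_face (k : ℤ) (hk : 0 < k) :
    {γ : ℤ × ℤ | 0 ≤ kPairing k γ (1, 0) ∧ 0 ≤ kPairing k γ (0, 1)} ∩
      {x : ℤ × ℤ | ∃ γ : ℤ × ℤ,
        0 ≤ kPairing k γ (-(1, 0)) ∧ 0 ≤ kPairing k γ ((0, 1) + k • (1, 0)) ∧
        x = γ + kPairing k γ (1, 0) • (1, 0)} =
    {γc : ℤ × ℤ | kPairing k γc (1, 0) = 0 ∧ 0 ≤ kPairing k γc (0, 1)} := by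
  ext ⟨a, b⟩
  simp only [Set.mem_inter_iff, Set.mem_setOf_eq, kPairing, Prod.mk.injEq, Prod.ext_iff,
    Prod.fst_add, Prod.snd_add, Prod.smul_mk, smul_eq_mul, Prod.fst_neg, Prod.snd_neg]
  constructor
  · rintro ⟨⟨h1, h2⟩, ⟨⟨c, d⟩, h3, h4, h5, h6⟩⟩
    simp at h1 h2 h3 h4 h5 h6
    constructor
    · -- b = 0 : from h1, -k b ≥ 0 so b ≤ 0; from h3, k b ≥ 0 so b ≥ 0
      have hb0 : b ≤ 0 := by nlinarith
      have hb1 : 0 ≤ b := by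
        have hb : b = d := by linarith [h6]
        subst hb
        nlinarith
      have : b = 0 := le_antisymm hb0 hb1
      simp [this]
    · linarith
  · rintro ⟨hb, ha⟩
    have hb0 : b = 0 := by
      rcases mul_eq_zero.mp hb with h | h
      · exact absurd h hk.ne'
      · nlinarith
    subst hb0
    refine ⟨⟨by simp, ha⟩, ⟨(a, 0), ?_, ?_, ?_, ?_⟩⟩ <;> simp <;> nlinarith
end
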